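/- Let ι(x) = (1−x)/(1+x). For every irrational x ∈ (0,1): ι(x) is an irrational number in (0,1); T(ι(x)) = ι(T(x)); and for every digit A ∈ 𝒜, x ∈ I_A if and only if ι(x) ∈ I_{φ(A)}. Consequently, for every n ≥ 1 the n-th SCF digit of ι(x) equals φ applied to the n-th SCF digit of x. -/

import Mathlib

open MeasureTheory Real Set Filter Topology

namespace SCF

/-- The involution `ι(x) = (1−x)/(1+x)`. -/
noncomputable def iota (x : ℝ) : ℝ := (1 - x) / (1 + x)

/-- Even continued-fraction step.  For `y ∈ (0,1/2]` one has
`⌊(1/y+1)/2⌋ = k` whenever `1/y ∈ (2k−1, 2k+1)`, so `Te y = |1/y − 2k|`;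
explicitly `Te y = 1/y − 2` on `[1/3,1/2]`, `Te y = 1/y − 2k` on
`[1/(2k+1), 1/(2k))` and `Te y = 2k − 1/y` on `[1/(2k), 1/(2k−1))` (`k ≥ 2`). -/
noncomputable def Te (y : ℝ) : ℝ := |1 / y - 2 * (⌊(1 / y + 1) / 2⌋ : ℝ)|

/-- The spliced continued fraction (SCF) map `T : [0,1] → [0,1]`, with
`T 0 = 0`, `T 1 = 1`.  On `(0,1/2]` it is the even continued fraction map
(see `Te`), and on `(1/2,1)` it is the odd–odd map, which is the conjugate
`ι ∘ Te ∘ ι` of the even map; this agrees with the branchwise definition: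
`T x = (k x − (k−1))/(k − (k+1) x)` on `((k−1)/k, (2k−1)/(2k+1)]` and
`T x = (k − (k+1) x)/(k x − (k−1))` on `((2k−1)/(2k+1), k/(k+1)]` for `k ≥ 2`. -/
noncomputable def T (x : ℝ) : ℝ :=
  if x ≤ 0 then 0
  else if 1 ≤ x then 1
  else if x ≤ 1 / 2 then Te x
  else iota (Te (iota x))

/-- Parity label of a digit: `e` (even cusp) or `o` (odd–odd cusp). -/
inductive Par | e | o
deriving DecidableEq

/-- A candidate SCF digit `(a, ε)_s`. -/
structure Digit where
  a : ℤ
  eps : ℤ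
  s : Par
deriving DecidableEq

/-- The digit set `𝒜 = {(k,ε)_s : k ≥ 2, ε = ±1, s ∈ {e,o}} ∪ {(1,+1)_e}`. -/
def Digit.Valid (d : Digit) : Prop :=
  (2 ≤ d.a ∧ (d.eps = 1 ∨ d.eps = -1)) ∨ (d.a = 1 ∧ d.eps = 1 ∧ d.s = Par.e)

/-- The branch intervals `I_{(a,ε)_s}` of the SCF map. -/
noncomputable def branch (d : Digit) : Set ℝ :=
  match d.s with
  | Par.e =>
      if d.a = 1 then Set.Icc (1/3 : ℝ) (1/2)
      else if d.eps = 1 then Set.Ico (1 / (2 * (d.a : ℝ) + 1)) (1 / (2 * (d.a : ℝ)))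
      else Set.Ico (1 / (2 * (d.a : ℝ))) (1 / (2 * (d.a : ℝ) - 1))
  | Par.o =>
      if d.eps = 1 then
        Set.Ioc ((2 * (d.a : ℝ) - 1) / (2 * (d.a : ℝ) + 1)) ((d.a : ℝ) / ((d.a : ℝ) + 1))
      else
        Set.Ioc (((d.a : ℝ) - 1) / (d.a : ℝ)) ((2 * (d.a : ℝ) - 1) / (2 * (d.a : ℝ) + 1))

open Classical in
/-- The SCF digit of a point `y` (the unique valid digit `d` with `y ∈ I_d`;
well defined for every `y ∈ (0,1)`). -/
noncomputable def digit (y : ℝ) : Digit :=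
  if h : ∃ d : Digit, d.Valid ∧ y ∈ branch d then h.choose else ⟨1, 1, Par.e⟩

/-- The `n`-th SCF digit `(a_n(x), ε_n(x))_{s_n(x)}` of `x`, `n ≥ 1`,
determined by `T^[n−1] x ∈ I_{(a_n,ε_n)_{s_n}}`. -/
noncomputable def dig (n : ℕ) (x : ℝ) : Digit := digit (T^[n - 1] x)

/-- The `n`-th SCF partial quotient `a_n(x)`. -/
noncomputable def a (n : ℕ) (x : ℝ) : ℤ := (dig n x).a

/-- The invariant density `f_μ`. -/
noncomputable def fdens (x : ℝ) : ℝ :=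
  2 / (Real.log (2 + Real.sqrt 3) * (1 - (2 - Real.sqrt 3) * x) * (1 + Real.sqrt 3 * x))

/-- The absolutely continuous `T`-invariant probability measure `μ` on `(0,1)`. -/
noncomputable def mu : Measure ℝ :=
  (volume.restrict (Set.Ioo (0 : ℝ) 1)).withDensity fun x => ENNReal.ofReal (fdens x)

/-- The inverse branches `h_{(a,ε)_s}` of the SCF map `T`. -/
noncomputable def h (d : Digit) (x : ℝ) : ℝ :=
  match d.s with
  | Par.e => 1 / (2 * (d.a : ℝ) + (d.eps : ℝ) * x)
  | Par.o =>
      if d.eps = 1 then (((d.a : ℝ) - 1) * x + (d.a : ℝ)) / ((d.a : ℝ) * x + ((d.a : ℝ) + 1))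
      else ((d.a : ℝ) * x + ((d.a : ℝ) - 1)) / (((d.a : ℝ) + 1) * x + (d.a : ℝ))

/-- Composed inverse branch `h_{A^{(n)}} = h_{A₁} ∘ ⋯ ∘ h_{A_n}` of a word. -/
noncomputable def hWord (l : List Digit) : ℝ → ℝ :=
  l.foldr (fun d g => h d ∘ g) id

/-- The dual inverse branches `bar h_{(b,η)_t}`. -/
noncomputable def hbar (d : Digit) (y : ℝ) : ℝ :=
  match d.s with
  | Par.e => (d.eps : ℝ) / (2 * (d.a : ℝ) + y)
  | Par.o =>
      1 / (1 + (d.eps : ℝ) / (((d.a : ℝ) - ((max 0 d.eps : ℤ) : ℝ)) + 1 / (1 + y)))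

/-- The matrix `M_{(a,ε)_s}` associated with the inverse branch `h_{(a,ε)_s}`. -/
noncomputable def Mdig (d : Digit) : Matrix (Fin 2) (Fin 2) ℝ :=
  match d.s with
  | Par.e => !![0, 1; (d.eps : ℝ), 2 * (d.a : ℝ)]
  | Par.o =>
      !![(d.a : ℝ) - ((max 0 d.eps : ℤ) : ℝ), (d.a : ℝ) - ((max 0 d.eps : ℤ) : ℝ) + (d.eps : ℝ);
         (d.a : ℝ) - ((max 0 d.eps : ℤ) : ℝ) + 1, (d.a : ℝ) - ((max 0 d.eps : ℤ) : ℝ) + (d.eps : ℝ) + 1]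

/-- `M_n(x) = M_{(a₁,ε₁)_{s₁}} ⋯ M_{(a_n,ε_n)_{s_n}}`. -/
noncomputable def Mn (n : ℕ) (x : ℝ) : Matrix (Fin 2) (Fin 2) ℝ :=
  ((List.range n).map fun i => Mdig (digit (T^[i] x))).prod

/-- `P_n(x)`: the `(1,2)`-entry of `M_n(x)` (numerator of the `n`-th convergent). -/
noncomputable def Pc (n : ℕ) (x : ℝ) : ℝ := Mn n x 0 1

/-- `Q_n(x)`: the `(2,2)`-entry of `M_n(x)` (denominator of the `n`-th convergent). -/
noncomputable def Qc (n : ℕ) (x : ℝ) : ℝ := Mn n x 1 1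


/-- The substitution `φ : 𝒜 → 𝒜` exchanging the parities `e` and `o`, fixing
`(1,+1)_e`. -/
def phi (d : Digit) : Digit :=
  if d.a = 1 ∧ d.eps = 1 ∧ d.s = Par.e then d
  else ⟨d.a, d.eps, match d.s with | Par.e => Par.o | Par.o => Par.e⟩

/-!
`ι` is an order-reversing involution of `(-1, ∞)` preserving `[0, 1]` and swapping `1/3` and
`1/2`. On `(1/2, 1)` the map `T` is `ι ∘ Te ∘ ι` by definition, so `T ∘ ι = ι ∘ T` is immediate
off `[1/3, 1/2]`; on `[1/3, 1/2]`, where `Te y = 1/y - 2`, it is the identity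
`1/ι(y) - 2 = ι(1/y - 2)`. Being order-reversing, `ι` maps the even branch `I_{(k,ε)_e}` onto the
odd branch `I_{(k,ε)_o}` and `[1/3, 1/2]` onto itself. The branches are pairwise disjoint (on the
even branch `(k, ε)`, `k ≥ 2`, one has `⌈1/y⌉ = 2k + (1+ε)/2`), so the digit of `ι y` is `φ` of
the digit of `y`, also when `y` lies in no branch and both digits take the default value
`(1,+1)_e`. Iterating the conjugacy along the orbit gives the statement for every digit.
-/

lemma iota_iota {x : ℝ} (hx : x ≠ -1) : iota (iota x) = x := by
  have : 1 + x ≠ 0 := fun h => hx (by linarith)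
  unfold iota
  field_simp
  ring

lemma iota_strictAntiOn : StrictAntiOn iota (Ioi (-1)) := by
  intro x hx y hy hxy
  rw [mem_Ioi] at hx hy
  rw [iota, iota, div_lt_div_iff₀ (by linarith) (by linarith)]
  nlinarith

lemma neg_one_lt_iota {x : ℝ} (hx : -1 < x) : -1 < iota x := by
  rw [iota, lt_div_iff₀ (by linarith)]
  linarith

lemma iota_mem_Icc {x : ℝ} (hx : x ∈ Icc 0 1) : iota x ∈ Icc 0 1 :=
  ⟨div_nonneg (by linarith [hx.2]) (by linarith [hx.1]),
    (div_le_one (by linarith [hx.1])).2 (by linarith [hx.1])⟩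

lemma iota_mem_Ioo {x : ℝ} (hx : x ∈ Ioo 0 1) : iota x ∈ Ioo 0 1 :=
  ⟨div_pos (by linarith [hx.2]) (by linarith [hx.1]),
    (div_lt_one (by linarith [hx.1])).2 (by linarith [hx.1])⟩

lemma irrational_iota {x : ℝ} (hx : Irrational x) : Irrational (iota x) := by
  have hx' : 1 + x ≠ 0 := fun h => hx.ne_int (-1) (by push_cast; linarith)
  have h : iota x = 2 * (1 + x)⁻¹ - 1 := by
    rw [iota]
    field_simp
    ring
  rw [h]
  simpa using ((hx.intCast_add 1).inv.intCast_mul two_ne_zero).sub_intCast 1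

lemma mem_Icc_iff_iota_mem_Icc {x l u : ℝ} (hx : -1 < x) (hl : -1 < l) (hu : -1 < u) :
    x ∈ Icc l u ↔ iota x ∈ Icc (iota u) (iota l) := by
  rw [mem_Icc, mem_Icc, iota_strictAntiOn.le_iff_ge hu hx, iota_strictAntiOn.le_iff_ge hx hl,
    and_comm]

lemma mem_Ico_iff_iota_mem_Ioc {x l u : ℝ} (hx : -1 < x) (hl : -1 < l) (hu : -1 < u) :
    x ∈ Ico l u ↔ iota x ∈ Ioc (iota u) (iota l) := by
  rw [mem_Ico, mem_Ioc, iota_strictAntiOn.lt_iff_gt hu hx, iota_strictAntiOn.le_iff_ge hx hl,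
    and_comm]

lemma iota_one_div {n : ℝ} (hn : 0 < n) : iota (1 / n) = (n - 1) / (n + 1) := by
  rw [iota]
  field_simp

lemma mem_Icc_third_half_iff {x : ℝ} (hx : -1 < x) :
    x ∈ Icc (1 / 3) (1 / 2) ↔ iota x ∈ Icc (1 / 3) (1 / 2) := by
  have h3 : iota (1 / 3) = 1 / 2 := by norm_num [iota]
  have h2 : iota (1 / 2) = 1 / 3 := by norm_num [iota]
  have h := mem_Icc_iff_iota_mem_Icc hx (l := 1 / 3) (u := 1 / 2) (by norm_num) (by norm_num)
  rwa [h3, h2] at h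

lemma Te_mem_Icc (y : ℝ) : Te y ∈ Icc 0 1 := by
  have hlo := Int.floor_le ((1 / y + 1) / 2)
  have hhi := Int.lt_floor_add_one ((1 / y + 1) / 2)
  exact ⟨abs_nonneg _, abs_le.2 ⟨by linarith, by linarith⟩⟩

lemma Te_of_mem_Icc {y : ℝ} (hy : y ∈ Icc (1 / 3) (1 / 2)) : Te y = 1 / y - 2 := by
  have hy0 : 0 < y := by linarith [hy.1]
  have hu2 : 2 ≤ 1 / y := by rw [le_div_iff₀ hy0]; linarith [hy.2]
  have hu3 : 1 / y ≤ 3 := by rw [div_le_iff₀ hy0]; linarith [hy.1]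
  set k := ⌊(1 / y + 1) / 2⌋
  have hTe : Te y = |1 / y - 2 * k| := rfl
  have hlo : (k : ℝ) ≤ (1 / y + 1) / 2 := Int.floor_le _
  have hhi : (1 / y + 1) / 2 < k + 1 := Int.lt_floor_add_one _
  -- at `y = 1/3` the floor jumps to `2`, but `|3 - 4| = 3 - 2` still
  obtain hk1 | hk2 : k = 1 ∨ k = 2 := by
    have h0 : (0 : ℝ) < k := by linarith
    have h3 : (k : ℝ) < 3 := by linarith
    have : 0 < k ∧ k < 3 := ⟨by exact_mod_cast h0, by exact_mod_cast h3⟩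
    omega
  · rw [hTe, hk1, Int.cast_one, abs_of_nonneg (by linarith)]
    ring
  · rw [hk2] at hlo
    rw [hTe, hk2, Int.cast_two, abs_of_nonpos (by linarith)]
    push_cast at hlo
    linarith

lemma Te_iota_of_mem_Icc {y : ℝ} (hy : y ∈ Icc (1 / 3) (1 / 2)) :
    Te (iota y) = iota (Te y) := by
  have hy0 : y ≠ 0 := by linarith [hy.1]
  have hy1 : 1 - y ≠ 0 := by linarith [hy.2]
  have hy2 : 1 + y ≠ 0 := by linarith [hy.1]
  have hιy := (mem_Icc_third_half_iff (by linarith [hy.1])).1 hy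
  rw [Te_of_mem_Icc hy, Te_of_mem_Icc hιy, iota, iota,
    show 1 + (1 / y - 2) = (1 - y) / y by field_simp; ring]
  field_simp
  ring

lemma T_of_le_half {x : ℝ} (h0 : 0 < x) (h : x ≤ 1 / 2) : T x = Te x := by
  rw [T, if_neg (by linarith), if_neg (by linarith), if_pos h]

lemma T_of_half_lt {x : ℝ} (h : 1 / 2 < x) (h1 : x < 1) : T x = iota (Te (iota x)) := by
  rw [T, if_neg (by linarith), if_neg (by linarith), if_neg (by linarith)]

lemma T_mem_Icc (x : ℝ) : T x ∈ Icc 0 1 := by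
  unfold T
  split_ifs
  · exact ⟨le_rfl, zero_le_one⟩
  · exact ⟨zero_le_one, le_rfl⟩
  · exact Te_mem_Icc x
  · exact iota_mem_Icc (Te_mem_Icc _)

lemma T_iota_of_le_half {x : ℝ} (hx : x ∈ Icc 0 (1 / 2)) : T (iota x) = iota (T x) := by
  obtain ⟨hx0, hx2⟩ := hx
  rcases hx0.eq_or_lt with rfl | hx0
  · norm_num [T, iota]
  rcases lt_or_ge x (1 / 3) with hx3 | hx3
  · have hιx : iota x ∈ Ioo (1 / 2) 1 := by
      refine ⟨?_, (iota_mem_Ioo ⟨hx0, by linarith⟩).2⟩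
      rw [iota, lt_div_iff₀ (by linarith)]
      linarith
    rw [T_of_half_lt hιx.1 hιx.2, iota_iota (by linarith), T_of_le_half hx0 hx2]
  · have hιx := (mem_Icc_third_half_iff (by linarith)).1 ⟨hx3, hx2⟩
    rw [T_of_le_half (by linarith [hιx.1]) hιx.2, T_of_le_half hx0 hx2,
      Te_iota_of_mem_Icc ⟨hx3, hx2⟩]

lemma T_iota {x : ℝ} (hx : x ∈ Icc 0 1) : T (iota x) = iota (T x) := by
  rcases le_or_gt x (1 / 2) with h | h
  · exact T_iota_of_le_half ⟨hx.1, h⟩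
  · have hιx : iota x ∈ Icc 0 (1 / 2) := by
      refine ⟨(iota_mem_Icc hx).1, ?_⟩
      rw [iota, div_le_iff₀ (by linarith)]
      linarith
    have h := T_iota_of_le_half hιx
    rw [iota_iota (by linarith)] at h
    rw [h, iota_iota (by linarith [(T_mem_Icc (iota x)).1])]

lemma iterate_T_mem_Icc {x : ℝ} (hx : x ∈ Icc 0 1) (n : ℕ) : T^[n] x ∈ Icc 0 1 :=
  (show MapsTo T (Icc 0 1) (Icc 0 1) from fun y _ => T_mem_Icc y).iterate n hx

lemma iterate_T_iota {x : ℝ} (hx : x ∈ Icc 0 1) (n : ℕ) :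
    T^[n] (iota x) = iota (T^[n] x) := by
  induction n with
  | zero => rfl
  | succ n ih =>
    rw [Function.iterate_succ_apply', Function.iterate_succ_apply', ih,
      T_iota (iterate_T_mem_Icc hx n)]

lemma phi_valid {d : Digit} (hd : d.Valid) : (phi d).Valid := by
  unfold phi
  split_ifs with h
  · exact hd
  · rcases hd with hd | hd
    · exact Or.inl hd
    · exact absurd hd h

lemma phi_e {a ε : ℤ} (ha : a ≠ 1) : phi ⟨a, ε, .e⟩ = ⟨a, ε, .o⟩ := by
  simp [phi, ha]

lemma phi_o (a ε : ℤ) : phi ⟨a, ε, .o⟩ = ⟨a, ε, .e⟩ := by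
  simp [phi]

lemma phi_one_one_e : phi ⟨1, 1, .e⟩ = ⟨1, 1, .e⟩ := by
  simp [phi]

lemma branch_one_one_e : branch ⟨1, 1, .e⟩ = Icc (1 / 3) (1 / 2) := by
  simp [branch]

lemma branch_plus_e {a : ℤ} (ha : a ≠ 1) :
    branch ⟨a, 1, .e⟩ = Ico (1 / (2 * (a : ℝ) + 1)) (1 / (2 * a)) := by
  simp [branch, ha]

lemma branch_minus_e {a : ℤ} (ha : a ≠ 1) :
    branch ⟨a, -1, .e⟩ = Ico (1 / (2 * (a : ℝ))) (1 / (2 * a - 1)) := by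
  simp [branch, ha]

lemma branch_plus_o (a : ℤ) :
    branch ⟨a, 1, .o⟩ = Ioc ((2 * (a : ℝ) - 1) / (2 * a + 1)) (a / (a + 1)) := by
  simp [branch]

lemma branch_minus_o (a : ℤ) :
    branch ⟨a, -1, .o⟩ = Ioc (((a : ℝ) - 1) / a) ((2 * a - 1) / (2 * a + 1)) := by
  simp [branch]

lemma mem_branch_e_iff_iota_mem_branch_phi {a ε : ℤ} (hd : Digit.Valid ⟨a, ε, .e⟩) {x : ℝ}
    (hx : -1 < x) : x ∈ branch ⟨a, ε, .e⟩ ↔ iota x ∈ branch (phi ⟨a, ε, .e⟩) := by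
  simp only [Digit.Valid] at hd
  rcases hd with ⟨ha, hε⟩ | ⟨rfl, rfl, -⟩
  · have ha1 : a ≠ 1 := by omega
    have haR : (2 : ℝ) ≤ a := by exact_mod_cast ha
    have h2a : iota (1 / (2 * a)) = (2 * a - 1) / (2 * a + 1) := iota_one_div (by positivity)
    rw [phi_e ha1]
    rcases hε with rfl | rfl
    · have h2a1 : iota (1 / (2 * a + 1)) = a / (a + 1) := by
        rw [iota_one_div (by positivity)]
        field_simp
        ring
      rw [branch_plus_e ha1, branch_plus_o, ← h2a, ← h2a1]
      exact mem_Ico_iff_iota_mem_Ioc hx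
        (by linarith [one_div_pos.2 (by linarith : (0 : ℝ) < 2 * a + 1)])
        (by linarith [one_div_pos.2 (by linarith : (0 : ℝ) < 2 * a)])
    · have h2a1 : iota (1 / (2 * a - 1)) = (a - 1) / a := by
        rw [iota_one_div (by linarith)]
        field_simp
        ring
      rw [branch_minus_e ha1, branch_minus_o, ← h2a, ← h2a1]
      exact mem_Ico_iff_iota_mem_Ioc hx
        (by linarith [one_div_pos.2 (by linarith : (0 : ℝ) < 2 * a)])
        (by linarith [one_div_pos.2 (by linarith : (0 : ℝ) < 2 * a - 1)])
  · rw [phi_one_one_e, branch_one_one_e]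
    exact mem_Icc_third_half_iff hx

lemma mem_branch_iff_iota_mem_branch_phi {d : Digit} (hd : d.Valid) {x : ℝ} (hx : -1 < x) :
    x ∈ branch d ↔ iota x ∈ branch (phi d) := by
  obtain ⟨a, ε, s⟩ := d
  cases s
  · exact mem_branch_e_iff_iota_mem_branch_phi hd hx
  · have hd' : Digit.Valid ⟨a, ε, .e⟩ := phi_o a ε ▸ phi_valid hd
    have ha : a ≠ 1 := by
      rcases hd with ⟨ha, -⟩ | ⟨-, -, ⟨⟩⟩
      exact ne_of_gt ha
    rw [phi_o, mem_branch_e_iff_iota_mem_branch_phi hd' (neg_one_lt_iota hx),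
      iota_iota (by linarith), phi_e ha]

lemma ceil_one_div_of_mem_Ico {n : ℤ} (hn : 0 < n) {y : ℝ}
    (hy : y ∈ Ico (1 / (n + 1 : ℝ)) (1 / n)) : ⌈1 / y⌉ = n + 1 := by
  have hn' : (0 : ℝ) < n := by exact_mod_cast hn
  have hy0 : 0 < y := lt_of_lt_of_le (by positivity) hy.1
  rw [Int.ceil_eq_iff]
  push_cast
  exact ⟨by linarith [(lt_one_div hn' hy0).2 hy.2], (one_div_le hy0 (by positivity)).2 hy.1⟩

lemma ceil_one_div_of_mem_branch_e {a ε : ℤ} (ha : 2 ≤ a) (hε : ε = 1 ∨ ε = -1) {y : ℝ}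
    (hy : y ∈ branch ⟨a, ε, .e⟩) : ⌈1 / y⌉ = 2 * a + (ε + 1) / 2 := by
  rcases hε with rfl | rfl
  · rw [branch_plus_e (by omega)] at hy
    rw [ceil_one_div_of_mem_Ico (n := 2 * a) (by omega) (by push_cast; exact hy)]
    omega
  · rw [branch_minus_e (by omega)] at hy
    rw [ceil_one_div_of_mem_Ico (n := 2 * a - 1) (by omega) (by push_cast; simpa using hy)]
    omega

lemma lt_third_of_mem_branch_e {a ε : ℤ} (ha : 2 ≤ a) (hε : ε = 1 ∨ ε = -1) {y : ℝ}
    (hy : y ∈ branch ⟨a, ε, .e⟩) : y < 1 / 3 := by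
  have hceil := ceil_one_div_of_mem_branch_e ha hε hy
  have h3 : ((3 : ℤ) : ℝ) < 1 / y := Int.lt_ceil.1 (by omega)
  push_cast at h3
  exact (lt_one_div (by norm_num) (one_div_pos.1 (by linarith))).1 h3

lemma eq_of_mem_branch_e {a ε b η : ℤ} (hd : Digit.Valid ⟨a, ε, .e⟩)
    (hd' : Digit.Valid ⟨b, η, .e⟩) {y : ℝ} (h : y ∈ branch ⟨a, ε, .e⟩)
    (h' : y ∈ branch ⟨b, η, .e⟩) : (⟨a, ε, .e⟩ : Digit) = ⟨b, η, .e⟩ := by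
  simp only [Digit.Valid] at hd hd'
  rcases hd with ⟨ha, hε⟩ | ⟨rfl, rfl, -⟩ <;> rcases hd' with ⟨hb, hη⟩ | ⟨rfl, rfl, -⟩
  · have hc := ceil_one_div_of_mem_branch_e ha hε h
    have hc' := ceil_one_div_of_mem_branch_e hb hη h'
    simp only [Digit.mk.injEq, and_true]
    omega
  · rw [branch_one_one_e] at h'
    linarith [lt_third_of_mem_branch_e ha hε h, h'.1]
  · rw [branch_one_one_e] at h
    linarith [lt_third_of_mem_branch_e hb hη h', h.1]
  · rfl

lemma le_half_of_mem_branch_e {a ε : ℤ} (hd : Digit.Valid ⟨a, ε, .e⟩) {y : ℝ}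
    (hy : y ∈ branch ⟨a, ε, .e⟩) : y ≤ 1 / 2 := by
  simp only [Digit.Valid] at hd
  rcases hd with ⟨ha, hε⟩ | ⟨rfl, rfl, -⟩
  · linarith [lt_third_of_mem_branch_e ha hε hy]
  · rw [branch_one_one_e] at hy
    exact hy.2

lemma half_lt_of_mem_branch_o {a ε : ℤ} (hd : Digit.Valid ⟨a, ε, .o⟩) {y : ℝ}
    (hy : y ∈ branch ⟨a, ε, .o⟩) : 1 / 2 < y := by
  rcases hd with ⟨ha, hε⟩ | ⟨-, -, ⟨⟩⟩
  have haR : (2 : ℝ) ≤ a := by exact_mod_cast ha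
  rcases hε with rfl | rfl
  · rw [branch_plus_o] at hy
    have : (1 : ℝ) / 2 ≤ (2 * a - 1) / (2 * a + 1) := by
      rw [div_le_div_iff₀ (by norm_num) (by linarith)]
      linarith
    linarith [hy.1]
  · rw [branch_minus_o] at hy
    have : (1 : ℝ) / 2 ≤ (a - 1) / a := by
      rw [div_le_div_iff₀ (by norm_num) (by linarith)]
      linarith
    linarith [hy.1]

lemma eq_of_mem_branch {d d' : Digit} (hd : d.Valid) (hd' : d'.Valid) {y : ℝ}
    (h : y ∈ branch d) (h' : y ∈ branch d') : d = d' := by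
  obtain ⟨a, ε, s⟩ := d
  obtain ⟨b, η, t⟩ := d'
  cases s <;> cases t
  · exact eq_of_mem_branch_e hd hd' h h'
  · linarith [half_lt_of_mem_branch_o hd' h', le_half_of_mem_branch_e hd h]
  · linarith [half_lt_of_mem_branch_o hd h, le_half_of_mem_branch_e hd' h']
  · have hy : -1 < y := by linarith [half_lt_of_mem_branch_o hd h]
    rw [mem_branch_iff_iota_mem_branch_phi hd hy, phi_o] at h
    rw [mem_branch_iff_iota_mem_branch_phi hd' hy, phi_o] at h'
    have hv : Digit.Valid ⟨a, ε, .e⟩ := phi_o a ε ▸ phi_valid hd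
    have hv' : Digit.Valid ⟨b, η, .e⟩ := phi_o b η ▸ phi_valid hd'
    simpa using eq_of_mem_branch_e hv hv' h h'

lemma digit_eq_of_mem_branch {d : Digit} (hd : d.Valid) {y : ℝ} (hy : y ∈ branch d) :
    digit y = d := by
  have h : ∃ d : Digit, d.Valid ∧ y ∈ branch d := ⟨d, hd, hy⟩
  rw [digit, dif_pos h]
  exact eq_of_mem_branch h.choose_spec.1 hd h.choose_spec.2 hy

lemma digit_iota {y : ℝ} (hy : -1 < y) : digit (iota y) = phi (digit y) := by
  by_cases h : ∃ d : Digit, d.Valid ∧ y ∈ branch d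
  · obtain ⟨d, hd, hyd⟩ := h
    rw [digit_eq_of_mem_branch hd hyd, digit_eq_of_mem_branch (phi_valid hd)
      ((mem_branch_iff_iota_mem_branch_phi hd hy).1 hyd)]
  · have h' : ¬ ∃ d : Digit, d.Valid ∧ iota y ∈ branch d := by
      rintro ⟨d, hd, hyd⟩
      have := (mem_branch_iff_iota_mem_branch_phi hd (neg_one_lt_iota hy)).1 hyd
      exact h ⟨phi d, phi_valid hd, by rwa [iota_iota (by linarith)] at this⟩
    rw [digit, digit, dif_neg h, dif_neg h', phi_one_one_e]

/-- `ι` conjugates `T` with itself and intertwines the digits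
via `φ`. -/
theorem iota_conjugacy :
    ∀ x ∈ Set.Ioo (0 : ℝ) 1, Irrational x →
      (Irrational (iota x) ∧ iota x ∈ Set.Ioo (0 : ℝ) 1) ∧
      T (iota x) = iota (T x) ∧
      (∀ d : Digit, d.Valid → (x ∈ branch d ↔ iota x ∈ branch (phi d))) ∧
      (∀ n : ℕ, 1 ≤ n → dig n (iota x) = phi (dig n x)) := by
  intro x hx hirr
  have hx' : x ∈ Icc 0 1 := Ioo_subset_Icc_self hx
  refine ⟨⟨irrational_iota hirr, iota_mem_Ioo hx⟩, T_iota hx',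
    fun d hd => mem_branch_iff_iota_mem_branch_phi hd (by linarith [hx.1]), fun n _ => ?_⟩
  rw [dig, dig, iterate_T_iota hx',
    digit_iota (by linarith [(iterate_T_mem_Icc hx' (n - 1)).1])]

end SCF
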